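/- (Generalized redex argument lookup) Let x be a variable occurrence involved in a generalized redex of M, with binder node λx̄ (x being the i-th variable bound by λx̄). Then: (i) the path in the computation tree from the parent @-node of the redex argument down to x's binder is a spinal alternation of the form @_r · λx̄_r ⋯ @_2 · λx̄_2 · @_1 · λx̄ for some r ≥ 0 (containing no variable node); (ii) the argument of x is precisely the i_k-th operand of the node @_k, where k is the smallest index satisfying i_k ≤ |@_k|, with i_1 = i and i_{j+1} = i_j − |@_j| + |λx̄_{j+1}|. -/

import Mathlib

set_option maxHeartbeats 1000000

namespace ULC

/-- Variable names. -/
abbrev Name := Nat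
/-- Positions (directed paths) in trees / terms. -/
abbrev Pos := List Nat

/-! ## Untyped lambda terms `Λ ::= x | (Λ Λ) | λx.Λ` -/

inductive Term where
  | var : Name → Term
  | app : Term → Term → Term
  | lam : Name → Term → Term
deriving DecidableEq

namespace Term

/-- Free variables of a term. -/
def fv : Term → List Name
  | var x => [x]
  | app u v => fv u ++ fv v
  | lam x u => (fv u).filter (· != x)

def size : Term → Nat
  | var _ => 1
  | app u v => size u + size v + 1
  | lam _ u => size u + 1

/-- Naive renaming of a free variable (used only with a fresh target). -/
def rename (y z : Name) : Term → Term
  | var w => var (if w = y then z else w)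
  | app u v => app (rename y z u) (rename y z v)
  | lam w u => if w = y then lam w u else lam w (rename y z u)

theorem size_rename (y z : Name) : ∀ t : Term, (t.rename y z).size = t.size := by
  intro t
  induction t with
  | var w => simp [rename, size]
  | app u v ihu ihv => simp [rename, size, ihu, ihv]
  | lam w u ih => by_cases h : w = y <;> simp [rename, size, h, ih]

/-- A name fresh for a given list of names. -/
def fresh (l : List Name) : Name := l.foldr max 0 + 1

/-- Capture-avoiding substitution `subst x s t = t[x := s]`. -/
def subst (x : Name) (s : Term) : Term → Term
  | var y => if y = x then s else var y
  | app u v => app (subst x s u) (subst x s v)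
  | lam y u =>
      if y = x then lam y u
      else if y ∈ s.fv ∧ x ∈ u.fv then
        let z := fresh (s.fv ++ u.fv ++ [x, y])
        lam z (subst x s (u.rename y z))
      else lam y (subst x s u)
termination_by t => t.size
decreasing_by
  all_goals simp only [size, size_rename]
  all_goals omega

end Term

/-! ## Beta reduction, alpha conversion -/

/-- One step of β-reduction. -/
inductive Beta : Term → Term → Prop where
  | redex (x : Name) (u v : Term) :
      Beta (.app (.lam x u) v) (Term.subst x v u)
  | appL {u u' : Term} (v : Term) : Beta u u' → Beta (.app u v) (.app u' v)
  | appR (u : Term) {v v' : Term} : Beta v v' → Beta (.app u v) (.app u v')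
  | lamC (x : Name) {u u' : Term} : Beta u u' → Beta (.lam x u) (.lam x u')

/-- α-equivalence. -/
inductive Alpha : Term → Term → Prop where
  | var (x : Name) : Alpha (.var x) (.var x)
  | app {u u' v v' : Term} :
      Alpha u u' → Alpha v v' → Alpha (.app u v) (.app u' v')
  | lam {x y : Name} {u u' : Term} :
      (∀ z, z ∉ u.fv → z ∉ u'.fv → Alpha (u.rename x z) (u'.rename y z)) →
      Alpha (.lam x u) (.lam y u')

/-- Many-step β-reduction. -/
def BetaStar : Term → Term → Prop := Relation.ReflTransGen Beta

/-- β-equivalence (as usual in the named λ-calculus, modulo α-conversion). -/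
def BetaEq : Term → Term → Prop :=
  Relation.EqvGen (fun a b => Beta a b ∨ Alpha a b)

/-- β-normal form: no redex, i.e. no β-step possible. -/
def IsBetaNormal (t : Term) : Prop := ∀ u, ¬ Beta t u

/-- `t` has a β-normal form. -/
def HasBnf (t : Term) : Prop := ∃ n, BetaStar t n ∧ IsBetaNormal n

/-! ## Head lambda-list, generalized redexes, lloc -/

namespace Term

/-- The head lambda-list `λ_l`. -/
def lamList : Term → List Name
  | var _ => []
  | lam x u => x :: lamList u
  | app u _ => (lamList u).tail

/-- Subterm at a position (0 = under a λ or operator of an app, 1 = operand). -/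
def subtermAt : Term → Pos → Option Term
  | t, [] => some t
  | lam _ u, 0 :: p => subtermAt u p
  | app u _, 0 :: p => subtermAt u p
  | app _ v, 1 :: p => subtermAt v p
  | _, _ => none

/-- Replace the subterm at a position. -/
def replaceAt : Term → Pos → Term → Term
  | _, [], s => s
  | lam x u, 0 :: p, s => lam x (replaceAt u p s)
  | app u v, 0 :: p, s => app (replaceAt u p s) v
  | app u v, 1 :: p, s => app u (replaceAt v p s)
  | t, _, _ => t

/-- Positions of the abstractions listed in the head lambda-list. -/
def lamListPos : Term → List Pos
  | var _ => []
  | lam _ u => ([] : Pos) :: (lamListPos u).map (fun q => 0 :: q)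
  | app u _ => ((lamListPos u).map (fun q => 0 :: q)).tail

/-- Generalized redexes: pairs (position of the λ-abstraction occurrence,
position of its argument). -/
def gr : Term → List (Pos × Pos)
  | var _ => []
  | lam _ u => (gr u).map (fun r => (0 :: r.1, 0 :: r.2))
  | app u v =>
      (match lamListPos u with
        | [] => []
        | q :: _ => [((0 :: q : Pos), ([1] : Pos))]) ++
      (gr u).map (fun r => (0 :: r.1, 0 :: r.2)) ++
      (gr v).map (fun r => (1 :: r.1, 1 :: r.2))

/-- Position of the binder of the variable occurrence at `p` (if bound). -/
def binderAux : Term → Pos → Pos → List (Name × Pos) → Option Pos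
  | var x, [], _, env => env.lookup x
  | lam y u, 0 :: p, cur, env => binderAux u p (cur ++ [0]) ((y, cur) :: env)
  | app u _, 0 :: p, cur, env => binderAux u p (cur ++ [0]) env
  | app _ v, 1 :: p, cur, env => binderAux v p (cur ++ [1]) env
  | _, _, _, _ => none

def binderOf (M : Term) (p : Pos) : Option Pos := binderAux M p [] []

/-- The variable occurrence at `p` is involved in a generalized redex of `M`. -/
def involvedB (M : Term) (p : Pos) : Bool :=
  M.gr.any (fun r => binderOf M p == some r.1)

def Involved (M : Term) (p : Pos) : Prop := involvedB M p = true

/-- The leftmost linear occurrence `lloc`. -/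
def llocAux (M : Term) : Term → Pos → Option Pos
  | var _, p => if involvedB M p then some p else none
  | lam _ u, p => llocAux M u (p ++ [0])
  | app u v, p =>
      match llocAux M u (p ++ [0]) with
      | some q => some q
      | none => if u.lamList = [] then llocAux M v (p ++ [1]) else none

def lloc (M : Term) : Option Pos := llocAux M M []

end Term

/-- Quasi normal form: no leftmost linear occurrence. -/
def Qnf (M : Term) : Prop := M.lloc = none

/-- Names bound somewhere in the term. -/
def Term.bndrs : Term → List Name
  | .var _ => []
  | .app u v => u.bndrs ++ v.bndrs
  | .lam x u => x :: u.bndrs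

/-- Barendregt convention: binder names are pairwise distinct and disjoint
from the free names. -/
def Barendregt (M : Term) : Prop :=
  M.bndrs.Nodup ∧ ∀ x ∈ M.bndrs, x ∉ M.fv

/-- One step of leftmost linear reduction: linearly fire the generalized
redex involving the lloc (working up to α-conversion, which realizes the
capture-avoiding renaming). -/
def LinStep (M N : Term) : Prop :=
  ∃ M', Alpha M M' ∧ Barendregt M' ∧
    ∃ p lp ap A, M'.lloc = some p ∧ Term.binderOf M' p = some lp ∧
      (lp, ap) ∈ M'.gr ∧ Term.subtermAt M' ap = some A ∧
      Alpha N (Term.replaceAt M' p A)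

/-- Firing a trivial redex `(λx.u)A` with `x ∉ fv u`. -/
def TrivStep (M N : Term) : Prop :=
  ∃ p x u A, Term.subtermAt M p = some (.app (.lam x u) A) ∧ x ∉ u.fv ∧
    N = Term.replaceAt M p u

def IsRedexAt (M : Term) (p : Pos) : Prop :=
  ∃ x u A, Term.subtermAt M p = some (.app (.lam x u) A)

def HasRedex (M : Term) : Prop := ∃ p, IsRedexAt M p

/-- `q` occurs (strictly) to the left of `p`. -/
def PosLeft (q p : Pos) : Prop :=
  (∃ r a b s₁ s₂, q = r ++ a :: s₁ ∧ p = r ++ b :: s₂ ∧ a < b) ∨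
  (q ≠ p ∧ q <+: p)

/-- A spinal-innermost redex: a β-redex whose operator body has no redex. -/
def SpinalInnermostAt (M : Term) (p : Pos) : Prop :=
  ∃ x u A, Term.subtermAt M p = some (.app (.lam x u) A) ∧ ¬ HasRedex u

/-- The leftmost spinal-innermost redex of `M` is at `p`. -/
def LSIAt (M : Term) (p : Pos) : Prop :=
  SpinalInnermostAt M p ∧ ∀ q, SpinalInnermostAt M q → ¬ PosLeft q p

/-- One step of the leftmost spinal-innermost reduction strategy. -/
def LSIStep (M N : Term) : Prop :=
  ∃ p x u A, LSIAt M p ∧ Term.subtermAt M p = some (.app (.lam x u) A) ∧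
    N = Term.replaceAt M p (Term.subst x A u)

/-! ## Head occurrence, hoc arguments, head reduction -/

/-- Position of the head (leftmost) variable occurrence. -/
def Term.hocPos : Term → Pos
  | .var _ => []
  | .lam _ u => 0 :: u.hocPos
  | .app u _ => 0 :: u.hocPos

/-- Quasi-head-normal form: the hoc is not involved in a generalized redex. -/
def Qhnf (M : Term) : Prop := ¬ Term.Involved M M.hocPos

/-- The arguments of the head variable occurrence. -/
def Term.args : Term → List Term
  | .var _ => []
  | .lam _ u => u.args
  | .app u v => if u.lamList = [] then u.args ++ [v] else u.args

def Term.headIsVar : Term → Prop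
  | .var _ => True
  | .app u _ => u.headIsVar
  | .lam _ _ => False

/-- Head normal form `λ x₁…xₙ. y A₁ … A_m`. -/
def IsHnf : Term → Prop
  | .var _ => True
  | .app u _ => u.headIsVar
  | .lam _ u => IsHnf u

/-- One step of head reduction. -/
inductive HeadStep : Term → Term → Prop where
  | redex (x : Name) (u v : Term) :
      HeadStep (.app (.lam x u) v) (Term.subst x v u)
  | lamC (x : Name) {u u' : Term} : HeadStep u u' → HeadStep (.lam x u) (.lam x u')
  | appL {u u' : Term} (v : Term) :
      (∀ y w, u ≠ .lam y w) → HeadStep u u' → HeadStep (.app u v) (.app u' v)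

/-- Number of arguments applied to the head variable. -/
def Term.headArgCount : Term → Nat
  | .var _ => 0
  | .lam _ u => u.headArgCount
  | .app u _ => u.headArgCount + 1

/-! ## Simple types and eta-long forms -/

inductive Ty where
  | base : Ty
  | arrow : Ty → Ty → Ty
deriving DecidableEq

mutual
/-- `ELong Γ M A`: `M` is a simply-typed term in η-long form of type `A`. -/
inductive ELong : List (Name × Ty) → Term → Ty → Prop where
  | arrow {Γ x A B U} : ELong ((x, A) :: Γ) U B → ELong Γ (.lam x U) (.arrow A B)
  | base {Γ M} : ESpine Γ M .base → ELong Γ M .base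

/-- Spines: a head (variable or abstraction) applied to η-long arguments. -/
inductive ESpine : List (Name × Ty) → Term → Ty → Prop where
  | var {Γ x A} : Γ.lookup x = some A → ESpine Γ (.var x) A
  | head {Γ x U A B} : ELong Γ (.lam x U) (.arrow A B) → ESpine Γ (.lam x U) (.arrow A B)
  | app {Γ U V A B} : ESpine Γ U (.arrow A B) → ELong Γ V A → ESpine Γ (.app U V) B
end

/-! ## Computation trees -/

/-- Node kinds of the computation tree. -/
inductive NKind where
  | lam | var | app
deriving DecidableEq

/-- Node labels of the computation tree. -/
inductive NLabel where
  | lam : List Name → NLabel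
  | var : Name → NLabel
  | app : NLabel
deriving DecidableEq

/-- Computation trees: bulk λ-nodes (with one child), variable nodes (with
λ-node children) and @-nodes (operator + operand λ-node children). -/
inductive CT where
  | lam : List Name → CT → CT
  | var : Name → List CT → CT
  | app : CT → List CT → CT

instance : Inhabited CT := ⟨.var 0 []⟩

namespace CT

def kind : CT → NKind
  | .lam _ _ => .lam
  | .var _ _ => .var
  | .app _ _ => .app

def labelOf : CT → NLabel
  | .lam xs _ => .lam xs
  | .var z _ => .var z
  | .app _ _ => .app

/-- Arity of a node: number of bound variables / children / operands. -/
def arity : CT → Nat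
  | .lam xs _ => xs.length
  | .var _ cs => cs.length
  | .app _ cs => cs.length

/-- The subtree rooted at a given path.  A λ-node's unique child has index 1;
the operator of an @-node has index 0 and its operands indices 1,…; the
children of a variable node have indices 1,…. -/
def nodeAt : CT → Pos → Option CT
  | t, [] => some t
  | .lam _ c, 1 :: p => nodeAt c p
  | .var _ cs, (k + 1) :: p =>
      match cs[k]? with
      | some c => nodeAt c p
      | none => none
  | .app op _, 0 :: p => nodeAt op p
  | .app _ cs, (k + 1) :: p =>
      match cs[k]? with
      | some c => nodeAt c p
      | none => none
  | _, _ => none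

end CT

mutual
def namesCT : CT → List Name
  | .lam xs c => xs ++ namesCT c
  | .var z cs => z :: namesL cs
  | .app op cs => namesCT op ++ namesL cs
def namesL : List CT → List Name
  | [] => []
  | c :: cs => namesCT c ++ namesL cs
end

mutual
def freeNamesCT : CT → List Name
  | .lam xs c => (freeNamesCT c).filter (fun z => ! xs.contains z)
  | .var z cs => z :: freeNamesL cs
  | .app op cs => freeNamesCT op ++ freeNamesL cs
def freeNamesL : List CT → List Name
  | [] => []
  | c :: cs => freeNamesCT c ++ freeNamesL cs
end

/-- Canonical enumeration of the free variables of the tree. -/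
def freeListCT (T : CT) : List Name := (freeNamesCT T).dedup

/-! ### The computation tree of a term -/

mutual
/-- The body node (variable or @) of the computation tree of a term. -/
def ctreeB : Term → CT
  | .var z => .var z []
  | .lam x u =>
      .app (match ctreeL u with
            | .lam xs c => CT.lam (x :: xs) c
            | c => CT.lam [x] c) []
  | .app u v =>
      match ctreeB u with
      | .var z cts => .var z (cts ++ [ctreeL v])
      | .app op cts => .app op (cts ++ [ctreeL v])
      | c => c
termination_by t => 2 * t.size
decreasing_by all_goals (simp only [Term.size]; omega)
/-- The computation tree of a term (rooted at a bulk λ-node). -/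
def ctreeL : Term → CT
  | .lam x u =>
      match ctreeL u with
      | .lam xs c => .lam (x :: xs) c
      | c => .lam [x] c
  | .var z => .lam [] (.var z [])
  | .app u v => .lam [] (ctreeB (.app u v))
termination_by t => 2 * t.size + 1
decreasing_by all_goals (simp only [Term.size]; omega)
end

def ctree (M : Term) : CT := ctreeL M

/-! ### Binders in the computation tree -/

/-- `binderGo` walks a path maintaining the binding environment; returns the
(binder position, binding index) of the variable node at the end of the path. -/
def binderGo : CT → Pos → Pos → List (Name × (Pos × Nat)) → Option (Pos × Nat)
  | .var z _, [], _, env => env.lookup z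
  | .lam xs c, 1 :: p, cur, env =>
      binderGo c p (cur ++ [1])
        ((((xs.zipIdx.map Prod.swap).map (fun e => (e.2, (cur, e.1 + 1)))).reverse) ++ env)
  | .var _ cs, (k + 1) :: p, cur, env =>
      match cs[k]? with
      | some c => binderGo c p (cur ++ [k + 1]) env
      | none => none
  | .app op _, 0 :: p, cur, env => binderGo op p (cur ++ [0]) env
  | .app _ cs, (k + 1) :: p, cur, env =>
      match cs[k]? with
      | some c => binderGo c p (cur ++ [k + 1]) env
      | none => none
  | _, _, _, _ => none

/-- Binder (with binding index) of a variable node in the computation tree. -/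
def binderInCT (T : CT) (q : Pos) : Option (Pos × Nat) := binderGo T q [] []

/-! ### Generalized redexes at the level of computation trees -/

def seqPre (k : Nat) (l : List (Pos × Nat)) : List (Pos × Nat) :=
  l.map (fun s => (k :: s.1, s.2))

/-- The slots (binder position, binding index) of the head lambda-list. -/
def ctLamSlots : CT → List (Pos × Nat)
  | .lam xs c =>
      (List.range xs.length).map (fun j => (([] : Pos), j + 1))
        ++ seqPre 1 (ctLamSlots c)
  | .var _ _ => []
  | .app op cs => (seqPre 0 (ctLamSlots op)).drop cs.length

def preRedex (k : Nat) (l : List ((Pos × Nat) × (Pos × Nat))) :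
    List ((Pos × Nat) × (Pos × Nat)) :=
  l.map (fun r => ((k :: r.1.1, r.1.2), (k :: r.2.1, r.2.2)))

mutual
/-- Generalized redexes of a computation tree: pairs of a lambda slot
(binder position, binding index) and an argument (position of the @-node
where it is consumed, operand index). -/
def ctGr : CT → List ((Pos × Nat) × (Pos × Nat))
  | .lam _ c => preRedex 1 (ctGr c)
  | .var _ cs => ctGrL 1 cs
  | .app op cs =>
      ((((seqPre 0 (ctLamSlots op)).take cs.length).zipIdx.map Prod.swap).map
        (fun e => (e.2, (([] : Pos), e.1 + 1))))
      ++ preRedex 0 (ctGr op) ++ ctGrL 1 cs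
def ctGrL : Nat → List CT → List ((Pos × Nat) × (Pos × Nat))
  | _, [] => []
  | k, c :: cs => preRedex k (ctGr c) ++ ctGrL (k + 1) cs
end

/-- The variable node at `q` is involved in a generalized redex of `T`. -/
def involvedCT (T : CT) (q : Pos) : Bool :=
  match binderInCT T q with
  | some bi => (ctGr T).any (fun r => r.1 == bi)
  | none => false

/-- Length of the head lambda-list of (the term denoted by) a tree. -/
def ctLamLen : CT → Nat
  | .lam xs c => xs.length + ctLamLen c
  | .var _ _ => 0
  | .app op cs => ctLamLen op - cs.length

mutual
/-- The lloc of the subtree `t` of `T` located at absolute position `q`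
(involvement is computed with respect to the whole tree `T`). -/
def llocCT (T : CT) : CT → Pos → Option Pos
  | .lam _ c, q => llocCT T c (q ++ [1])
  | .var _ cs, q =>
      if involvedCT T q then some q else llocArgs T cs q 0 1
  | .app op cs, q =>
      match llocCT T op (q ++ [0]) with
      | some r => some r
      | none => llocArgs T cs q (ctLamLen op) 1
def llocArgs (T : CT) : List CT → Pos → Nat → Nat → Option Pos
  | [], _, _, _ => none
  | a :: rest, q, l, k =>
      if l = 0 then
        match llocCT T a (q ++ [k]) with
        | some r => some r
        | none => llocArgs T rest q 0 (k + 1)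
      else llocArgs T rest q (l - 1) (k + 1)
end

/-- The lloc of the subterm rooted at node `p` of the tree `T`. -/
def llocNode (T : CT) (p : Pos) : Option Pos :=
  match T.nodeAt p with
  | some sub => llocCT T sub p
  | none => none
/-! ## Extended nodes: structural nodes and ghost nodes -/

/-- Extended nodes: structural nodes (paths of the computation tree) and
ghost nodes, determined by their enabler and a label `k` exceeding its arity. -/
inductive ENode where
  | s : Pos → ENode
  | g : ENode → Nat → ENode
deriving DecidableEq

instance : Inhabited ENode := ⟨.s []⟩

def kindAt (T : CT) (p : Pos) : Option NKind := (T.nodeAt p).map CT.kind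

def arityAt (T : CT) (p : Pos) : Nat := ((T.nodeAt p).map CT.arity).getD 0

/-- Bound variables of the λ-node at `p`. -/
def boundAt (T : CT) (p : Pos) : List Name :=
  match T.nodeAt p with
  | some (.lam xs _) => xs
  | _ => []

namespace ENode

/-- Kind of an extended node (ghosts alternate kinds with their enabler). -/
def kindIn (T : CT) : ENode → Option NKind
  | .s p => kindAt T p
  | .g e _ =>
      match e.kindIn T with
      | some .lam => some .var
      | some _ => some .lam
      | none => none

/-- Arity of an extended node (ghost nodes have arity 0). -/
def arityIn (T : CT) : ENode → Nat
  | .s p => arityAt T p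
  | .g _ _ => 0

def isGhost : ENode → Bool
  | .s _ => false
  | .g _ _ => true

end ENode

/-- The unique enabler of a structural node: λ-nodes are enabled by their
parent (with the child index as label), variable nodes by their binder (with
the binding index) or by the root (with a label indexing the free variable
beyond the root's arity); @-nodes have no enabler. -/
def enablerF (T : CT) (p : Pos) : Option (Pos × Nat) :=
  match T.nodeAt p with
  | none => none
  | some (.app _ _) => none
  | some (.lam _ _) =>
      if h : p = [] then none else some (p.dropLast, p.getLast h)
  | some (.var z _) =>
      match binderInCT T p with
      | some b => some b
      | none => some (([] : Pos), arityAt T [] + 1 + (freeListCT T).idxOf z)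

/-- Structural enabling relation `bp ⊢_k q`. -/
def EnablesS (T : CT) (bp : Pos) (k : Nat) (q : Pos) : Prop :=
  (q = bp ++ [k] ∧ (T.nodeAt q).isSome = true ∧
    (kindAt T bp = some .var ∨ kindAt T bp = some .app))
  ∨ (kindAt T q = some .var ∧ binderInCT T q = some (bp, k))
  ∨ (binderInCT T q = none ∧ bp = [] ∧
      ∃ z cs, T.nodeAt q = some (.var z cs) ∧
        k = arityAt T [] + 1 + (freeListCT T).idxOf z)

def extPB (T : CT) : Nat → Pos → Bool
  | 0, _ => false
  | fuel + 1, p =>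
      if p = [] then true
      else
        match enablerF T p with
        | none => false
        | some (q, _) => extPB T fuel q

/-- External nodes: hereditarily enabled by the root. -/
def ENode.extIn (T : CT) : ENode → Bool
  | .s p => extPB T (p.length + 1) p
  | .g e _ => e.extIn T

/-! ## Justified sequences of nodes

A justified sequence is represented as a list of occurrences in **reverse
chronological order** (the head of the list is the last occurrence).  Each
occurrence carries a pointer given by a distance `dist` (`0` = no pointer)
and a label `jlab`, together with a list `pend` of *pending lambdas*. -/

structure Occ where
  node : ENode
  dist : Nat
  jlab : Nat
  pend : List Name
deriving DecidableEq

instance : Inhabited Occ := ⟨⟨.s [], 0, 0, []⟩⟩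

/-- The occurrence of the root of the tree. -/
def rootOcc : Occ := ⟨.s [], 0, 0, []⟩

/-- Indices (into the reversed sequence) of the occurrences retained by the
P-view. -/
def pviewIdx (T : CT) : List Occ → List Nat
  | [] => []
  | o :: s =>
      if o.node.kindIn T = some .lam then
        if o.dist = 0 then [0]
        else 0 :: o.dist :: ((pviewIdx T (s.drop o.dist)).map (fun i => i + o.dist + 1))
      else 0 :: (pviewIdx T s).map (fun i => i + 1)
termination_by s => s.length
decreasing_by
  all_goals simp [List.length_drop]
  all_goals omega

/-- Indices of the occurrences retained by the O-view. -/
def oviewIdx (T : CT) : List Occ → List Nat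
  | [] => []
  | o :: s =>
      if o.node.kindIn T = some .lam then 0 :: (oviewIdx T s).map (fun i => i + 1)
      else
        if o.dist = 0 then [0]
        else 0 :: o.dist :: ((oviewIdx T (s.drop o.dist)).map (fun i => i + o.dist + 1))
termination_by s => s.length
decreasing_by
  all_goals simp [List.length_drop]
  all_goals omega

/-- Extract the subsequence of `s` given by indices (with pending-lambda
data), recomputing justification pointers within the subsequence. -/
def extractK (s : List Occ) (ks : List (Nat × List Name)) (setPend : Bool) :
    List Occ :=
  let idxs := ks.map Prod.fst
  (ks.zipIdx.map Prod.swap).map (fun e =>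
    let a := e.1
    let i := e.2.1
    let o := (s[i]?).getD default
    let d :=
      if o.dist = 0 then 0
      else
        let b := idxs.idxOf (i + o.dist)
        if b < idxs.length ∧ a < b then b - a else 0
    { o with dist := d, pend := if setPend then e.2.2 else o.pend })

/-- The P-view of a justified sequence. -/
def pview (T : CT) (s : List Occ) : List Occ :=
  extractK s ((pviewIdx T s).map (fun i => (i, ([] : List Name)))) false

/-- The O-view of a justified sequence. -/
def oview (T : CT) (s : List Occ) : List Occ :=
  extractK s ((oviewIdx T s).map (fun i => (i, ([] : List Name)))) false

/-- Follow justification pointers from index `i`; returns the index of the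
final pointer-less occurrence. -/
def chainEnd (s : List Occ) : Nat → Nat → Option Nat
  | 0, _ => none
  | fuel + 1, i =>
      match s[i]? with
      | none => none
      | some o => if o.dist = 0 then some i else chainEnd s fuel (i + o.dist)

def herEnd (s : List Occ) (i : Nat) : Option Nat := chainEnd s s.length i

/-- The occurrence at index `i` is hereditarily justified by the root. -/
def HerRoot (s : List Occ) (i : Nat) : Prop :=
  ∃ j o, herEnd s i = some j ∧ s[j]? = some o ∧ o.node = ENode.s []

/-- The occurrence at index `i` is hereditarily justified by an @-node. -/
def HerApp (T : CT) (s : List Occ) (i : Nat) : Prop :=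
  ∃ j o, herEnd s i = some j ∧ s[j]? = some o ∧ o.node.kindIn T = some .app

/-! ## Arity threshold -/

/-- Auxiliary computation of the arity threshold along the last strand. -/
def athZ (T : CT) : List Occ → Int → Int
  | nq :: aq :: rest, acc =>
      if aq.node.extIn T then 0
      else
        max ((nq.node.arityIn T : Int) + acc)
            (athZ T rest (acc + (nq.node.arityIn T : Int) - (aq.node.arityIn T : Int)))
  | _, _ => 0

/-- The arity threshold of a traversal ending with an external variable. -/
def ath (T : CT) (s : List Occ) : Nat := (athZ T s 0).toNat

/-! ## Imaginary traversals (Table 1) and their restrictions -/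

/-- Configuration selecting the variants of the traversal rules. -/
structure TravCfg where
  branch : Bool   -- rule IVar restricted to justifier = last occurrence
  bound : Bool    -- rule IVar label bounded by the arity threshold
  etaVar : Bool   -- eta-expanded subcase of rule Var allowed
  etaIVar : Bool  -- eta-expanded subcase of rule IVar allowed
  ghostLam : Bool -- rule Lam^ghost allowed

/-- The traversal rules (Table 1 of the paper, and its restrictions). -/
inductive TravR (T : CT) (cfg : TravCfg) : List Occ → Prop where
  | root : TravR T cfg [rootOcc]
  | app {s : List Occ} {o : Occ} {p : Pos} :
      TravR T cfg (o :: s) →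
      o.node = .s p → kindAt T p = some .app →
      TravR T cfg (⟨.s (p ++ [0]), 1, 0, []⟩ :: o :: s)
  | lamApp {s : List Occ} {o : Occ} {p : Pos} :
      TravR T cfg (o :: s) →
      o.node = .s p → kindAt T p = some .lam →
      kindAt T (p ++ [1]) = some .app →
      TravR T cfg (⟨.s (p ++ [1]), 0, 0, []⟩ :: o :: s)
  | lamVar {s : List Occ} {o j : Occ} {p bp : Pos} {d k : Nat} :
      TravR T cfg (o :: s) →
      o.node = .s p → kindAt T p = some .lam →
      kindAt T (p ++ [1]) = some .var →
      1 ≤ d → (o :: s)[d - 1]? = some j → j.node = .s bp →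
      EnablesS T bp k (p ++ [1]) →
      (d - 1) ∈ pviewIdx T (o :: s) →
      TravR T cfg (⟨.s (p ++ [1]), d, k, []⟩ :: o :: s)
  | lamGhost {s : List Occ} {gl n a : Occ} :
      cfg.ghostLam = true →
      TravR T cfg (gl :: s) →
      gl.node.isGhost = true → gl.node.kindIn T = some .lam →
      1 ≤ gl.dist → s[gl.dist - 1]? = some n → s[gl.dist]? = some a →
      n.node.kindIn T = some .var → a.node.kindIn T = some .lam →
      TravR T cfg
        (⟨.g a.node (a.node.arityIn T + gl.jlab - n.node.arityIn T),
          gl.dist + 2, a.node.arityIn T + gl.jlab - n.node.arityIn T, []⟩ :: gl :: s)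
  | varC {s : List Occ} {n a m : Occ} {q : Pos} :
      TravR T cfg (n :: s) →
      n.node.kindIn T = some .var →
      HerApp T (n :: s) 0 →
      1 ≤ n.dist → 1 ≤ n.jlab →
      s[n.dist - 1]? = some a → a.node.kindIn T = some .lam →
      s[n.dist]? = some m →
      (m.node.kindIn T = some .var ∨ m.node.kindIn T = some .app) →
      m.node = .s q → n.jlab ≤ arityAt T q →
      TravR T cfg (⟨.s (q ++ [n.jlab]), n.dist + 2, n.jlab, []⟩ :: n :: s)
  | varE {s : List Occ} {n a m : Occ} :
      cfg.etaVar = true →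
      TravR T cfg (n :: s) →
      n.node.kindIn T = some .var →
      HerApp T (n :: s) 0 →
      1 ≤ n.dist → 1 ≤ n.jlab →
      s[n.dist - 1]? = some a → a.node.kindIn T = some .lam →
      s[n.dist]? = some m →
      (m.node.kindIn T = some .var ∨ m.node.kindIn T = some .app) →
      m.node.arityIn T < n.jlab →
      TravR T cfg (⟨.g m.node n.jlab, n.dist + 2, n.jlab, []⟩ :: n :: s)
  | ivarC {s : List Occ} {n m : Occ} {q : Pos} {jm i : Nat} :
      TravR T cfg (n :: s) →
      n.node.kindIn T = some .var →
      (cfg.branch = true → n.node.extIn T = true) →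
      (cfg.branch = false → HerRoot (n :: s) 0) →
      1 ≤ i →
      (n :: s)[jm]? = some m → m.node.kindIn T = some .var →
      jm ∈ oviewIdx T (n :: s) →
      (cfg.branch = true → jm = 0) →
      (cfg.bound = true → i ≤ ath T (n :: s)) →
      m.node = .s q → i ≤ arityAt T q →
      TravR T cfg (⟨.s (q ++ [i]), jm + 1, i, []⟩ :: n :: s)
  | ivarE {s : List Occ} {n m : Occ} {jm i : Nat} :
      cfg.etaIVar = true →
      TravR T cfg (n :: s) →
      n.node.kindIn T = some .var →
      (cfg.branch = true → n.node.extIn T = true) →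
      (cfg.branch = false → HerRoot (n :: s) 0) →
      1 ≤ i →
      (n :: s)[jm]? = some m → m.node.kindIn T = some .var →
      jm ∈ oviewIdx T (n :: s) →
      (cfg.branch = true → jm = 0) →
      (cfg.bound = true → i ≤ ath T (n :: s)) →
      m.node.arityIn T < i →
      TravR T cfg (⟨.g m.node i, jm + 1, i, []⟩ :: n :: s)

/-- Imaginary traversals of the untyped λ-calculus (Table 1). -/
def Trav (T : CT) : List Occ → Prop :=
  TravR T ⟨false, false, true, true, true⟩

/-- Branching traversals: rule IVar points to the last occurrence. -/
def TravB (T : CT) : List Occ → Prop :=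
  TravR T ⟨true, false, true, true, true⟩

/-- Normalizing traversals (Table 2): branching + arity-threshold bound. -/
def TravN (T : CT) : List Occ → Prop :=
  TravR T ⟨true, true, true, true, true⟩

/-- STLC traversals: no ghost rules at all. -/
def TravSTLC (T : CT) : List Occ → Prop :=
  TravR T ⟨false, false, false, false, false⟩

/-- Traversals without the eta-expanded subcase of rule IVar. -/
def TravNoEtaIVar (T : CT) : List Occ → Prop :=
  TravR T ⟨false, false, true, false, true⟩

/-- Chronological prefix of length `n` of an infinite sequence of
occurrences, in reverse representation. -/
def prefixRev (f : Nat → Occ) (n : Nat) : List Occ :=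
  ((List.range n).map f).reverse
/-! ## Justified paths of the computation tree -/

/-- Justified paths: paths of the computation tree from the root, equipped
with the induced justification pointers (bound variables point to their
binder with the binding index, free variables to the root, λ-nodes to their
parent with the child index). -/
inductive JPath (T : CT) : List Occ → Prop where
  | root : JPath T [rootOcc]
  | lam {s : List Occ} {o : Occ} {p : Pos} {k : Nat} :
      JPath T (o :: s) → o.node = .s p →
      (kindAt T p = some .var ∨ kindAt T p = some .app) →
      (T.nodeAt (p ++ [k])).isSome = true → kindAt T (p ++ [k]) = some .lam →
      JPath T (⟨.s (p ++ [k]), 1, k, []⟩ :: o :: s)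
  | appNode {s : List Occ} {o : Occ} {p : Pos} :
      JPath T (o :: s) → o.node = .s p → kindAt T p = some .lam →
      kindAt T (p ++ [1]) = some .app →
      JPath T (⟨.s (p ++ [1]), 0, 0, []⟩ :: o :: s)
  | varNode {s : List Occ} {o j : Occ} {p bp : Pos} {d k : Nat} :
      JPath T (o :: s) → o.node = .s p → kindAt T p = some .lam →
      kindAt T (p ++ [1]) = some .var →
      1 ≤ d → (o :: s)[d - 1]? = some j → j.node = .s bp →
      EnablesS T bp k (p ++ [1]) →
      JPath T (⟨.s (p ++ [1]), d, k, []⟩ :: o :: s)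

/-- Maximal justified paths. -/
def MaxJPath (T : CT) (s : List Occ) : Prop :=
  JPath T s ∧ ∀ o, ¬ JPath T (o :: s)

/-- Label of an occurrence (structural nodes only). -/
def labOf (T : CT) (o : Occ) : Option NLabel :=
  match o.node with
  | .s p => (T.nodeAt p).map CT.labelOf
  | .g _ _ => none

/-! ## Structures of justified sequences -/

/-- The structure of an occurrence: node kind, pointer distance, pointer
label (node labels are forgotten). -/
structure OccStr where
  kind : Option NKind
  dist : Nat
  jlab : Nat
deriving DecidableEq

/-- The structure of a justified sequence. -/
def strOf (T : CT) (s : List Occ) : List OccStr :=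
  s.map (fun o => ⟨o.node.kindIn T, o.dist, o.jlab⟩)

/-! ## Core projection -/

/-- Indices (with pending-lambda relabelling data) retained by the core
projection, computed with a stack `ys` of pending lambdas. -/
def coreIdx (T : CT) : List Occ → List Name → List (Nat × List Name)
  | [], _ => []
  | o :: s, ys =>
      match o.node.kindIn T with
      | some .var =>
          if o.node.extIn T then
            (0, o.pend) :: (coreIdx T s []).map (fun e => (e.1 + 1, e.2))
          else (coreIdx T s (ys.drop (o.node.arityIn T))).map (fun e => (e.1 + 1, e.2))
      | some .app =>
          (coreIdx T s (ys.drop (o.node.arityIn T))).map (fun e => (e.1 + 1, e.2))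
      | some .lam =>
          if o.node.extIn T then
            (0, o.pend ++ ys) :: (coreIdx T s []).map (fun e => (e.1 + 1, e.2))
          else
            match o.node with
            | .s p =>
                (coreIdx T s (boundAt T p ++ o.pend ++ ys)).map (fun e => (e.1 + 1, e.2))
            | .g _ _ => (coreIdx T s (o.pend ++ ys)).map (fun e => (e.1 + 1, e.2))
      | none => (coreIdx T s ys).map (fun e => (e.1 + 1, e.2))

/-- The core of a justified sequence: the subsequence of external occurrences,
with pending lambdas prepended to the labels of external λ-nodes. -/
def core (T : CT) (s : List Occ) : List Occ :=
  extractK s (coreIdx T s []) true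

/-! ## On-the-fly eta-expansion -/

def modArg : List CT → Nat → (CT → CT) → List CT
  | [], _, _ => []
  | c :: cs, 0, f => f c :: cs
  | c :: cs, k + 1, f => c :: modArg cs k f

def CT.modifyAt : CT → Pos → (CT → CT) → CT
  | t, [], f => f t
  | .lam xs c, 1 :: p, f => .lam xs (c.modifyAt p f)
  | .var z cs, (k + 1) :: p, f => .var z (modArg cs k (fun c => c.modifyAt p f))
  | .app op cs, 0 :: p, f => .app (op.modifyAt p f) cs
  | .app op cs, (k + 1) :: p, f => .app op (modArg cs k (fun c => c.modifyAt p f))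
  | t, _, _ => t
termination_by t p _ => p.length
decreasing_by all_goals simp

def freshCT (T : CT) : Name := (namesCT T).foldr max 0 + 1

/-- One eta-expansion step at the variable/@-node `q`: the subterm `N`
rooted at `q` is replaced by `λθ. N θ` for a fresh `θ` (in the computation
tree, `θ` is appended to the bound variables of the parent λ-node and a new
operand `λ⟨θ⟩` is appended to the children of `q`). -/
def etaStep (T : CT) (q : Pos) : CT :=
  let θ := freshCT T
  let T1 := T.modifyAt q (fun n =>
    match n with
    | .var z cs => .var z (cs ++ [.lam [] (.var θ [])])
    | .app op cs => .app op (cs ++ [.lam [] (.var θ [])])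
    | t => t)
  T1.modifyAt q.dropLast (fun n =>
    match n with
    | .lam xs c => .lam (xs ++ [θ]) c
    | t => t)

/-- Process the occurrences of a traversal chronologically, performing an
eta-expansion at the justifier of each ghost λ-node occurrence (the
eta-expanded subcases of rules Var and IVar); `acc` records the materialized
position of each processed occurrence. -/
def etaFoldGo : CT → List Pos → List Occ → CT
  | T, _, [] => T
  | T, acc, o :: os =>
      match o.node with
      | .s p => etaFoldGo T (p :: acc) os
      | .g _ i =>
          if o.node.kindIn T = some .lam then
            let q := acc.getD (o.dist - 1) []
            etaFoldGo (etaStep T q) ((q ++ [i]) :: acc) os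
          else
            let q := acc.getD 0 []
            etaFoldGo T ((q ++ [1]) :: acc) os

/-- The on-the-fly eta-expansion `M^t` of (the computation tree of) a term
with respect to a finite traversal `t`. -/
def etaExpCT (T : CT) (t : List Occ) : CT := etaFoldGo T [] t.reverse

/-- Element-wise, pointer-preserving extension of a map on extended nodes to
justified sequences. -/
def mapOcc (η : ENode → ENode) (s : List Occ) : List Occ :=
  s.map (fun o => { o with node := η o.node })

/-! ## Isomorphisms of sets of justified sequences -/

/-- Structure-preserving bijection between two sets of justified sequences
(over trees `T₁` and `T₂` respectively). -/
def StrIso (T₁ T₂ : CT) (S₁ S₂ : Set (List Occ)) : Prop :=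
  ∃ φ : List Occ → List Occ, Set.BijOn φ S₁ S₂ ∧
    ∀ s ∈ S₁, strOf T₂ (φ s) = strOf T₁ s

/-- The set of cores of normalizing traversals of a term. -/
def CoreSet (M : Term) : Set (List Occ) :=
  {c | ∃ t, TravN (ctree M) t ∧ c = core (ctree M) t}

/-- The set of structures of core P-views of normalizing traversals
(the quotient `Trav^n(M)/∼`, each class identified with the common structure
of the core P-views of its members). -/
def QuotSet (M : Term) : Set (List OccStr) :=
  {x | ∃ t, TravN (ctree M) t ∧
        x = strOf (ctree M) (pview (ctree M) (core (ctree M) t))}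
/-! ## Strands (for the weaving proposition) -/

/-- `n_q` of the last strand: the (var/@)-occurrence at index `2(q-1)` of the
reversed sequence (`q` counted from 1, so `n_1` is the last occurrence). -/
def nOcc (t : List Occ) (q : Nat) : Occ := (t[2 * (q - 1)]?).getD default

/-- `α_q` of the last strand: the λ-occurrence at index `2q - 1`. -/
def aOcc (t : List Occ) (q : Nat) : Occ := (t[2 * q - 1]?).getD default

def nAr (T : CT) (t : List Occ) (q : Nat) : Int := ((nOcc t q).node.arityIn T : Int)
def aAr (T : CT) (t : List Occ) (q : Nat) : Int := ((aOcc t q).node.arityIn T : Int)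

/-- `i_q = i - ∑_{j=1}^{q-1} (|n_j| - |α_j|)`. -/
def iSeq (T : CT) (t : List Occ) (i : Nat) (q : Nat) : Int :=
  (i : Int) - ∑ j ∈ Finset.Ico 1 q, (nAr T t j - aAr T t j)

/-- The last strand of `t` has length `2k`: it starts with an external
λ-node `α_k`, ends with the last occurrence `n_1`, an external variable,
and all the `2k - 2` occurrences in between are internal, alternating
between λ-nodes and variable/@-nodes. -/
def LastStrand (T : CT) (t : List Occ) (k : Nat) : Prop :=
  1 ≤ k ∧ 2 * k ≤ t.length ∧
  (∀ q, 1 ≤ q → q ≤ k →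
    ((nOcc t q).node.kindIn T = some .var ∨ (nOcc t q).node.kindIn T = some .app)) ∧
  (∀ q, 1 ≤ q → q ≤ k → (aOcc t q).node.kindIn T = some .lam) ∧
  (nOcc t 1).node.kindIn T = some .var ∧ (nOcc t 1).node.extIn T = true ∧
  (aOcc t k).node.extIn T = true ∧
  (∀ j, 1 ≤ j → j ≤ 2 * k - 2 → ∀ o, t[j]? = some o → o.node.extIn T = false)

/-! ## Spinal paths (for the generalized redex argument lookup) -/

/-- Position of `@_j` on the spinal descent below the @-node at `a`
(`@_r = a` is the topmost one, `@_1` the lowest). -/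
def atPos (a : Pos) (r j : Nat) : Pos :=
  a ++ (List.replicate (r - j) ([0, 1] : Pos)).flatten

/-- The sequence `i_1 = i`, `i_{j+1} = i_j - |@_j| + |λx̄_{j+1}|` along the
spinal descent. -/
def iSeqL (T : CT) (a : Pos) (r i : Nat) : Nat → Int
  | 0 => (i : Int)
  | 1 => (i : Int)
  | j + 1 =>
      iSeqL T a r i j - (arityAt T (atPos a r j) : Int)
        + (arityAt T (atPos a r (j + 1) ++ [0]) : Int)
end ULC

/-!
In a computation tree λ-nodes alternate with variable and @-nodes, and the operator of an
@-node is a λ-node `λx̄ · N`. The head λ-list of that operator is `x̄` followed, when `N` is an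
@-node, by what remains of the head λ-list of the operator of `N` after its `|N|` operands
have been consumed. So the `e`-th slot of the operator of an @-node is either bound by its
own `λx̄` (when `e < |x̄|`) or is the `(e - |x̄| + |N|)`-th slot of the operator of `N`; read
from the binder upwards this is the recurrence `i_{j+1} = i_j - |@_j| + |λx̄_{j+1}|`, and the
slot forms a generalized redex with the `i_k`-th operand exactly when `i_k ≤ |@_k|`.
-/

namespace ULC

namespace CT

theorem nodeAt_append {A C : CT} {u : Pos} (h : A.nodeAt u = some C) (p : Pos) :
    A.nodeAt (u ++ p) = C.nodeAt p := by
  induction u generalizing A with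
  | nil => cases h; rfl
  | cons k u ih =>
    rw [List.cons_append]
    cases A with
    | lam xs c =>
      rcases k with _ | _ | k
      · simp [nodeAt] at h
      · exact ih h
      · simp [nodeAt] at h
    | var z cs =>
      rcases k with _ | k
      · simp [nodeAt] at h
      · cases hc : cs[k]? <;> simp only [nodeAt, hc, reduceCtorEq] at h ⊢; exact ih h
    | app op cs =>
      rcases k with _ | k
      · exact ih h
      · cases hc : cs[k]? <;> simp only [nodeAt, hc, reduceCtorEq] at h ⊢; exact ih h

inductive WellFormed : CT → Prop
  | lam_var {xs : List Name} {z : Name} {cs : List CT} :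
      (∀ c ∈ cs, WellFormed c) → WellFormed (.lam xs (.var z cs))
  | lam_app {xs : List Name} {op : CT} {cs : List CT} :
      WellFormed op → (∀ c ∈ cs, WellFormed c) → WellFormed (.lam xs (.app op cs))

theorem WellFormed.exists_eq_lam {T : CT} (h : T.WellFormed) : ∃ xs c, T = .lam xs c := by
  cases h <;> exact ⟨_, _, rfl⟩

theorem WellFormed.rebind {xs ys : List Name} {c : CT} (h : (CT.lam xs c).WellFormed) :
    (CT.lam ys c).WellFormed := by
  cases h with
  | lam_var hcs => exact .lam_var hcs
  | lam_app hop hcs => exact .lam_app hop hcs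

end CT

theorem kindAt_of_nodeAt {T C : CT} {p : Pos} (h : T.nodeAt p = some C) :
    kindAt T p = some C.kind := by
  simp [kindAt, h]

theorem arityAt_of_nodeAt {T C : CT} {p : Pos} (h : T.nodeAt p = some C) :
    arityAt T p = C.arity := by
  simp [arityAt, h]

/-- The second conjunct says that `ctreeB M` is a variable or @-node with well-formed subtrees. -/
theorem wellFormed_ctreeL_and_ctreeB (M : Term) :
    (ctreeL M).WellFormed ∧ ∀ xs, (CT.lam xs (ctreeB M)).WellFormed := by
  induction M with
  | var z =>
    rw [ctreeL, ctreeB]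
    exact ⟨.lam_var (by simp), fun _ => .lam_var (by simp)⟩
  | lam x u ih =>
    obtain ⟨xs, c, hc⟩ := ih.1.exists_eq_lam
    have hwf : (CT.lam (x :: xs) c).WellFormed := (hc ▸ ih.1).rebind
    rw [ctreeL, ctreeB, hc]
    exact ⟨hwf, fun _ => .lam_app hwf (by simp)⟩
  | app u v ihu ihv =>
    have hB : ∀ xs, (CT.lam xs (ctreeB (.app u v))).WellFormed := by
      intro xs
      rw [ctreeB]
      generalize ctreeB u = B at ihu ⊢
      rcases ihu.2 [] with _ | ⟨hop, hcs⟩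
      · exact .lam_var (List.forall_mem_append.2 ⟨‹_›, List.forall_mem_singleton.2 ihv.1⟩)
      · exact .lam_app hop (List.forall_mem_append.2 ⟨hcs, List.forall_mem_singleton.2 ihv.1⟩)
    rw [ctreeL]
    exact ⟨hB [], hB⟩

theorem atPos_self (a : Pos) (r : Nat) : atPos a r r = a := by
  simp [atPos]

theorem atPos_succ_length {a : Pos} {r j : Nat} (h : j ≤ r) :
    atPos a (r + 1) j = atPos (a ++ [0, 1]) r j := by
  simp [atPos, Nat.sub_add_comm h, List.replicate_succ]

theorem iSeqL_succ (T : CT) (a : Pos) (r i : Nat) {j : Nat} (h : 1 ≤ j) :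
    iSeqL T a r i (j + 1) =
      iSeqL T a r i j - arityAt T (atPos a r j) + arityAt T (atPos a r (j + 1) ++ [0]) := by
  obtain ⟨j, rfl⟩ := Nat.exists_eq_add_of_le' h
  rfl

theorem iSeqL_succ_length (T : CT) (a : Pos) (i : Nat) {r j : Nat} (h : j ≤ r) :
    iSeqL T a (r + 1) i j = iSeqL T (a ++ [0, 1]) r i j := by
  induction j with
  | zero => rfl
  | succ j ih =>
    rcases Nat.eq_zero_or_pos j with rfl | hj
    · rfl
    · rw [iSeqL_succ _ _ _ _ hj, iSeqL_succ _ _ _ _ hj, ih (by omega),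
        atPos_succ_length (by omega), atPos_succ_length h]

structure IsLookupSpine (T : CT) (a : Pos) (r i : Nat) : Prop where
  one_le : 1 ≤ r
  kind_app : ∀ j, 1 ≤ j → j ≤ r → kindAt T (atPos a r j) = some .app
  kind_lam : ∀ j, 1 ≤ j → j ≤ r → kindAt T (atPos a r j ++ [0]) = some .lam
  /-- minimality of `r`: no lower `@_j` has enough operands for the slot `i_j` -/
  arity_lt : ∀ j, 1 ≤ j → j < r → (arityAt T (atPos a r j) : Int) < iSeqL T a r i j

theorem isLookupSpine_one {T : CT} {a : Pos} (i : Nat) (happ : kindAt T a = some .app)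
    (hlam : kindAt T (a ++ [0]) = some .lam) : IsLookupSpine T a 1 i where
  one_le := le_rfl
  kind_app j h₁ h₂ := by rwa [show j = 1 by omega, atPos_self]
  kind_lam j h₁ h₂ := by rwa [show j = 1 by omega, atPos_self]
  arity_lt j h₁ h₂ := by omega

theorem IsLookupSpine.succ {T : CT} {a : Pos} {r i : Nat}
    (hs : IsLookupSpine T (a ++ [0, 1]) r i) (happ : kindAt T a = some .app)
    (hlam : kindAt T (a ++ [0]) = some .lam)
    (hlt : (arityAt T (a ++ [0, 1]) : Int) < iSeqL T (a ++ [0, 1]) r i r) :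
    IsLookupSpine T a (r + 1) i where
  one_le := by omega
  kind_app j h₁ h₂ := by
    rcases Nat.lt_or_ge j (r + 1) with hj | hj
    · rw [atPos_succ_length (by omega)]; exact hs.kind_app j h₁ (by omega)
    · rwa [show j = r + 1 by omega, atPos_self]
  kind_lam j h₁ h₂ := by
    rcases Nat.lt_or_ge j (r + 1) with hj | hj
    · rw [atPos_succ_length (by omega)]; exact hs.kind_lam j h₁ (by omega)
    · rwa [show j = r + 1 by omega, atPos_self]
  arity_lt j h₁ h₂ := by
    rw [atPos_succ_length (by omega), iSeqL_succ_length _ _ _ (by omega)]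
    rcases Nat.lt_or_ge j r with hj | hj
    · exact hs.arity_lt j h₁ hj
    · rwa [show j = r by omega, atPos_self]

theorem ctLamSlots_lam_getElem?_of_lt {xs : List Name} {c : CT} {e : Nat} (h : e < xs.length) :
    (ctLamSlots (.lam xs c))[e]? = some ([], e + 1) := by
  simp [ctLamSlots, List.getElem?_append_left, h]

theorem ctLamSlots_lam_getElem?_of_le {xs : List Name} {c : CT} {e : Nat} (h : xs.length ≤ e) :
    (ctLamSlots (.lam xs c))[e]? =
      ((ctLamSlots c)[e - xs.length]?).map (fun s => (1 :: s.1, s.2)) := by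
  simp [ctLamSlots, List.getElem?_append_right, h, seqPre]

theorem ctLamSlots_app_getElem? {op : CT} {cs : List CT} {e : Nat} :
    (ctLamSlots (.app op cs))[e]? =
      ((ctLamSlots op)[cs.length + e]?).map (fun s => (0 :: s.1, s.2)) := by
  simp [ctLamSlots, seqPre]

theorem exists_isLookupSpine_of_lt {T c : CT} {xs : List Name} {cs : List CT} {a : Pos}
    {e : Nat} {p : Pos} {j : Nat} (ha : T.nodeAt a = some (.app (.lam xs c) cs))
    (he : e < xs.length) (hslot : (ctLamSlots (.lam xs c))[e]? = some (p, j)) :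
    ∃ r, IsLookupSpine T a r j ∧ a ++ 0 :: p = atPos a r 1 ++ [0] ∧ iSeqL T a r j r = e + 1 := by
  rw [ctLamSlots_lam_getElem?_of_lt he] at hslot
  cases hslot
  have hop : T.nodeAt (a ++ [0]) = some (.lam xs c) := CT.nodeAt_append ha [0]
  exact ⟨1, isLookupSpine_one _ (kindAt_of_nodeAt ha) (kindAt_of_nodeAt hop),
    by rw [atPos_self], by simp [iSeqL]⟩

theorem exists_isLookupSpine_of_getElem?_ctLamSlots {T L : CT} (hL : L.WellFormed) {a : Pos}
    {cs : List CT} {e : Nat} {p : Pos} {j : Nat} (ha : T.nodeAt a = some (.app L cs))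
    (hslot : (ctLamSlots L)[e]? = some (p, j)) :
    ∃ r, IsLookupSpine T a r j ∧ a ++ 0 :: p = atPos a r 1 ++ [0] ∧ iSeqL T a r j r = e + 1 := by
  induction hL generalizing a cs e p j with
  | @lam_var xs z cs' =>
    rcases Nat.lt_or_ge e xs.length with he | he
    · exact exists_isLookupSpine_of_lt ha he hslot
    · rw [ctLamSlots_lam_getElem?_of_le he] at hslot
      simp [ctLamSlots] at hslot
  | @lam_app xs op cs' _ _ ih _ =>
    rcases Nat.lt_or_ge e xs.length with he | he
    · exact exists_isLookupSpine_of_lt ha he hslot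
    rw [ctLamSlots_lam_getElem?_of_le he, ctLamSlots_app_getElem?] at hslot
    simp only [Option.map_map, Option.map_eq_some_iff, Function.comp_def, Prod.exists,
      Prod.mk.injEq] at hslot
    obtain ⟨p', _, hslot', rfl, rfl⟩ := hslot
    have hfun : T.nodeAt (a ++ [0]) = some (.lam xs (.app op cs')) := CT.nodeAt_append ha [0]
    have hbody : T.nodeAt (a ++ [0, 1]) = some (.app op cs') := CT.nodeAt_append ha [0, 1]
    obtain ⟨r, hs, hb, hlast⟩ := ih hbody hslot'
    have hbody_ar : arityAt T (a ++ [0, 1]) = cs'.length := arityAt_of_nodeAt hbody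
    have hfun_ar : arityAt T (a ++ [0]) = xs.length := arityAt_of_nodeAt hfun
    refine ⟨r + 1, hs.succ (kindAt_of_nodeAt ha) (kindAt_of_nodeAt hfun) (by omega), ?_, ?_⟩
    · rw [atPos_succ_length hs.one_le, ← hb]
      simp
    · rw [iSeqL_succ _ _ _ _ hs.one_le, iSeqL_succ_length _ _ _ le_rfl, hlast,
        atPos_succ_length le_rfl, atPos_self, atPos_self, hbody_ar, hfun_ar]
      omega

def ArgLookup (T : CT) (b : Pos) (i : Nat) (a : Pos) (m : Nat) : Prop :=
  ∃ r, IsLookupSpine T a r i ∧ b = atPos a r 1 ++ [0] ∧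
    iSeqL T a r i r ≤ arityAt T a ∧ (m : Int) = iSeqL T a r i r

section Membership

variable {b a : Pos} {i m : Nat}

theorem mem_preRedex {k : Nat} {l : List ((Pos × Nat) × (Pos × Nat))} :
    ((b, i), (a, m)) ∈ preRedex k l ↔
      ∃ b' a', b = k :: b' ∧ a = k :: a' ∧ ((b', i), (a', m)) ∈ l := by
  simp only [preRedex, List.mem_map, Prod.exists, Prod.mk.injEq]
  constructor
  · rintro ⟨b', i', a', m', h, ⟨rfl, rfl⟩, rfl, rfl⟩
    exact ⟨b', a', rfl, rfl, h⟩
  · rintro ⟨b', a', rfl, rfl, h⟩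
    exact ⟨b', i, a', m, h, ⟨rfl, rfl⟩, rfl, rfl⟩

theorem mem_ctGrL {k : Nat} {cs : List CT} (h : ((b, i), (a, m)) ∈ ctGrL k cs) :
    ∃ d c b' a', cs[d]? = some c ∧ b = (d + k) :: b' ∧ a = (d + k) :: a' ∧
      ((b', i), (a', m)) ∈ ctGr c := by
  induction cs generalizing k with
  | nil => simp [ctGrL] at h
  | cons c cs ih =>
    rw [ctGrL, List.mem_append] at h
    rcases h with h | h
    · obtain ⟨b', a', rfl, rfl, hc⟩ := mem_preRedex.1 h
      exact ⟨0, c, b', a', rfl, by simp, by simp, hc⟩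
    · obtain ⟨d, c', b', a', hd, rfl, rfl, hc⟩ := ih h
      have hdk : d + (k + 1) = d + 1 + k := by omega
      exact ⟨d + 1, c', b', a', hd, by rw [hdk], by rw [hdk], hc⟩

theorem mem_ctGr_app {op : CT} {cs : List CT} (h : ((b, i), (a, m)) ∈ ctGr (.app op cs)) :
    (a = [] ∧ ∃ e p, e < cs.length ∧ m = e + 1 ∧ b = 0 :: p ∧ (ctLamSlots op)[e]? = some (p, i)) ∨
      ((b, i), (a, m)) ∈ preRedex 0 (ctGr op) ∨ ((b, i), (a, m)) ∈ ctGrL 1 cs := by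
  rw [ctGr, List.mem_append, List.mem_append, or_assoc] at h
  refine h.imp_left fun h => ?_
  simp only [List.mem_map, Prod.exists, Prod.swap_prod_mk, Prod.mk.injEq] at h
  obtain ⟨_, _, _, ⟨b', i', e, hz, rfl, rfl, rfl⟩, ⟨rfl, rfl⟩, rfl, rfl⟩ := h
  rw [List.mk_mem_zipIdx_iff_getElem?, List.getElem?_take] at hz
  split_ifs at hz with he
  simp only [seqPre, List.getElem?_map, Option.map_eq_some_iff, Prod.exists, Prod.mk.injEq] at hz
  obtain ⟨p, _, hp, rfl, rfl⟩ := hz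
  exact ⟨rfl, e, p, he, rfl, rfl, hp⟩

end Membership

theorem argLookup_of_mem_ctGr {T L : CT} (hL : L.WellFormed) {u b a : Pos} {i m : Nat}
    (hu : T.nodeAt u = some L) (h : ((b, i), (a, m)) ∈ ctGr L) :
    ArgLookup T (u ++ b) i (u ++ a) m := by
  induction hL generalizing u b a i m with
  | @lam_var xs z cs _ ih =>
    obtain ⟨b, a, rfl, rfl, hbody⟩ := mem_preRedex.1 h
    obtain ⟨d, c, b, a, hc, rfl, rfl, hchild⟩ := mem_ctGrL hbody
    have hcu : T.nodeAt (u ++ [1, d + 1]) = some c := by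
      simp [CT.nodeAt_append hu, CT.nodeAt, hc]
    simpa using ih c (List.mem_of_getElem? hc) hcu hchild
  | @lam_app xs op cs hop _ ihop ih =>
    obtain ⟨b, a, rfl, rfl, hbody⟩ := mem_preRedex.1 h
    have hu' : T.nodeAt (u ++ [1]) = some (.app op cs) := CT.nodeAt_append hu [1]
    rcases mem_ctGr_app hbody with ⟨rfl, e, p, he, rfl, rfl, hslot⟩ | hin_op | hin_args
    · obtain ⟨r, hs, hb, hlast⟩ := exists_isLookupSpine_of_getElem?_ctLamSlots hop hu' hslot
      refine ⟨r, hs, by simpa using hb, ?_, by rw [hlast]; push_cast; rfl⟩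
      rw [hlast, arityAt_of_nodeAt hu', CT.arity]
      omega
    · obtain ⟨b, a, rfl, rfl, hred⟩ := mem_preRedex.1 hin_op
      simpa using ihop (CT.nodeAt_append hu [1, 0]) hred
    · obtain ⟨d, c, b, a, hc, rfl, rfl, hchild⟩ := mem_ctGrL hin_args
      have hcu : T.nodeAt (u ++ [1, d + 1]) = some c := by
        simp [CT.nodeAt_append hu, CT.nodeAt, hc]
      simpa using ih c (List.mem_of_getElem? hc) hcu hchild

end ULC

namespace Stmt11
open ULC

/-- **Generalized redex argument lookup.** Let `x` be a
variable occurrence (node `q` of the computation tree) involved in a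
generalized redex of `M`, with binder `λx̄` at `b` and binding index `i`,
and with argument the `m`-th operand of the @-node at `a`.  Then (i) the
path from `a` down to `b` is a spinal alternation `@_r λx̄_r ⋯ @_1 λx̄`
(with no variable nodes), and (ii) the argument is the `i_k`-th operand of
`@_k` where `k = r` is the smallest index with `i_k ≤ |@_k|`,
`i_1 = i` and `i_{j+1} = i_j - |@_j| + |λx̄_{j+1}|`. -/
theorem genredex_lookup (M : Term) (T : CT) (hT : T = ctree M)
    (q b : Pos) (i : Nat) (a : Pos) (m : Nat)
    (hvar : kindAt T q = some .var)
    (hbind : binderInCT T q = some (b, i))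
    (hgr : ((b, i), (a, m)) ∈ ctGr T) :
    ∃ r, 1 ≤ r ∧
      b = atPos a r 1 ++ [0] ∧
      (∀ j, 1 ≤ j → j ≤ r → kindAt T (atPos a r j) = some .app) ∧
      (∀ j, 1 ≤ j → j ≤ r → kindAt T (atPos a r j ++ [0]) = some .lam) ∧
      (∀ j, 1 ≤ j → j < r → (arityAt T (atPos a r j) : Int) < iSeqL T a r i j) ∧
      iSeqL T a r i r ≤ (arityAt T a : Int) ∧
      (m : Int) = iSeqL T a r i r := by
  subst hT
  obtain ⟨r, hs, hb, hle, hm⟩ :=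
    argLookup_of_mem_ctGr (wellFormed_ctreeL_and_ctreeB M).1 (u := []) rfl hgr
  exact ⟨r, hs.one_le, hb, hs.kind_app, hs.kind_lam, hs.arity_lt, hle, hm⟩

end Stmt11
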